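/- arXiv:2211.16826 — 5 statements merged into one kernel-verified Lean document; each statement's English description precedes it below -/
import Mathlib

section
/- For every continuous function ξ : [0,T] → ℝ one has ∫₀ᵀ ∫₀ᵀ φ(u−v) ξ(u) ξ(v) du dv ≥ 0; that is, the bilinear form ⟨ξ,η⟩_T = ∫₀ᵀ ∫₀ᵀ φ(u−v) ξ(u) η(v) du dv is positive semidefinite on continuous functions. -/
/-!
For `-1 < r < 0` put `p = (r - 1) / 2`. Substituting `s = u + τ (v - u)` gives
`∫ s, |s - u| ^ p * |s - v| ^ p = C * |u - v| ^ r` with `C = ∫ τ, |τ| ^ p * |τ - 1| ^ p`,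
which is finite and positive since `-1 < p < -1/2`. So the Riesz kernel `|u - v| ^ r` is a
Gram kernel, and by Fubini
`∫∫ |u - v| ^ r g u g v = C⁻¹ * ∫ s, (∫ u, g u * |s - u| ^ p) ^ 2 ≥ 0`.
With `r = 2H - 2` and `H (2H - 1) ≥ 0` this is the theorem.
-/

open MeasureTheory intervalIntegral Set

open Real Filter Asymptotics

theorem integral_prod_integral_mul_nonneg {α β : Type*} [MeasurableSpace α]
    [MeasurableSpace β] {μ : Measure α} {ν : Measure β} [SFinite μ] [SFinite ν] {f : α → β → ℝ}
    (hf : Integrable (fun q : (α × α) × β => f q.1.1 q.2 * f q.1.2 q.2) ((μ.prod μ).prod ν)) :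
    0 ≤ ∫ p, ∫ s, f p.1 s * f p.2 s ∂ν ∂μ.prod μ := by
  rw [integral_integral_swap hf]
  refine integral_nonneg fun s => ?_
  rw [integral_prod_mul (fun u => f u s) (fun v => f v s), ← sq]
  exact sq_nonneg _

lemma ae_prod_fst_ne_snd {α : Type*} [MeasurableSpace α] [MeasurableEq α]
    {μ ν : Measure α} [SFinite ν] [NullSingletonClass ν] :
    ∀ᵐ p ∂μ.prod ν, p.1 ≠ p.2 := by
  refine (Measure.ae_prod_iff_ae_ae (p := fun p : α × α => p.1 ≠ p.2)
    measurableSet_diagonal.compl).2 ?_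
  exact ae_of_all _ fun x => (measure_eq_zero_iff_ae_notMem.1 (measure_singleton x)).mono
    fun y hy => (Ne.symm hy :)

lemma ae_prod_restrict_mem {α β : Type*} [MeasurableSpace α] [MeasurableSpace β]
    {μ : Measure α} {ν : Measure β} [SFinite μ] [SFinite ν] {s : Set α} {t : Set β}
    (hs : MeasurableSet s) (ht : MeasurableSet t) :
    ∀ᵐ p ∂(μ.restrict s).prod (ν.restrict t), p.1 ∈ s ∧ p.2 ∈ t := by
  rw [Measure.prod_restrict]
  exact ae_restrict_mem (hs.prod ht)

lemma locallyIntegrable_abs_sub_rpow {r : ℝ} (hr : -1 < r) (c : ℝ) :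
    LocallyIntegrable fun x : ℝ => |x - c| ^ r := by
  have h0 : LocallyIntegrable fun x : ℝ => |x| ^ r :=
    locallyIntegrable_of_norm_le_rpow (α := -r) (C := 1) (by simp) (by simpa using neg_lt.mpr hr)
      (ae_of_all _ fun x => by simp [abs_of_nonneg (rpow_nonneg (abs_nonneg x) r)])
      (by fun_prop : Measurable fun x : ℝ => |x| ^ r).aestronglyMeasurable
  rw [← map_sub_right_eq_self volume c] at h0
  exact (locallyIntegrable_map_homeomorph (Homeomorph.subRight c)).1 h0

lemma abs_sub_rpow_isBigO_cocompact {a : ℝ} (ha : a ≤ 0) (c : ℝ) :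
    (fun x : ℝ => |x - c| ^ a) =O[cocompact ℝ] fun x => (1 + |x|) ^ a := by
  refine IsBigO.of_bound ((1 / 2) ^ a) ?_
  have : ∀ᶠ x : ℝ in cocompact ℝ, 2 * |c| + 1 ≤ |x| := by
    simpa using (tendsto_norm_cocompact_atTop (E := ℝ)).eventually_ge_atTop (2 * |c| + 1)
  filter_upwards [this] with x hx
  have hxc : (1 / 2) * (1 + |x|) ≤ |x - c| := by
    have := abs_sub_abs_le_abs_sub x c
    linarith
  rw [norm_of_nonneg (by positivity), norm_of_nonneg (by positivity),
    ← mul_rpow (by norm_num) (by positivity)]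
  exact rpow_le_rpow_of_nonpos (by positivity) hxc ha

lemma integrable_abs_sub_rpow_restrict_Ioc_prod {r : ℝ} (hr : -1 < r) (a b : ℝ) :
    Integrable (fun p : ℝ × ℝ => |p.1 - p.2| ^ r)
      ((volume.restrict (Ioc a b)).prod (volume.restrict (Ioc a b))) := by
  set c := b - a
  -- On `Ioc a b ×ˢ Ioc a b` the integrand is the convolution integrand `1 * k (u - v)`, with `k`
  -- the kernel truncated to `[-c, c]`.
  have hk : Integrable ((Icc (-c) c).indicator fun w : ℝ => |w| ^ r) := by
    refine IntegrableOn.integrable_indicator ?_ measurableSet_Icc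
    simpa using (locallyIntegrable_abs_sub_rpow hr 0).integrableOn_isCompact isCompact_Icc
  have hconv := (integrable_const (1 : ℝ) (μ := volume.restrict (Ioc a b))).convolution_integrand
    (ContinuousLinearMap.mul ℝ ℝ) hk
  refine (hconv.mono_measure (Measure.prod_mono Measure.restrict_le_self le_rfl)).congr ?_
  filter_upwards [ae_prod_restrict_mem measurableSet_Ioc measurableSet_Ioc] with p ⟨hu, hv⟩
  have : p.1 - p.2 ∈ Icc (-c) c := ⟨by linarith [hu.1, hv.2], by linarith [hu.2, hv.1]⟩
  simp [indicator_of_mem this]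

lemma integrable_abs_sub_rpow_mul_mul_restrict_Ioc_prod {r : ℝ} (hr : -1 < r) {g : ℝ → ℝ}
    (hg : Measurable g) {a b M : ℝ} (hM : ∀ x ∈ Ioc a b, ‖g x‖ ≤ M) :
    Integrable (fun q : ℝ × ℝ => |q.1 - q.2| ^ r * g q.1 * g q.2)
      ((volume.restrict (Ioc a b)).prod (volume.restrict (Ioc a b))) := by
  have hmeas : Measurable fun q : ℝ × ℝ => |q.1 - q.2| ^ r * g q.1 * g q.2 := by fun_prop
  refine ((integrable_abs_sub_rpow_restrict_Ioc_prod hr a b).const_mul (M * M)).mono'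
    hmeas.aestronglyMeasurable ?_
  filter_upwards [ae_prod_restrict_mem measurableSet_Ioc measurableSet_Ioc] with q ⟨hu, hv⟩
  rw [norm_mul, norm_mul, norm_of_nonneg (rpow_nonneg (abs_nonneg _) _), mul_assoc, mul_comm]
  exact mul_le_mul_of_nonneg_right
    (mul_le_mul (hM _ hu) (hM _ hv) (norm_nonneg _) ((norm_nonneg _).trans (hM _ hu)))
    (rpow_nonneg (abs_nonneg _) _)

lemma abs_rpow_mul_abs_sub_one_rpow_le {p : ℝ} (hp : p ≤ 0) (τ : ℝ) :
    |τ| ^ p * |τ - 1| ^ p ≤ (1 / 2) ^ p * (|τ| ^ p + |τ - 1| ^ p) := by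
  have hsum : 1 ≤ |τ| + |τ - 1| := by
    calc (1 : ℝ) = |τ - (τ - 1)| := by simp
      _ ≤ |τ| + |τ - 1| := abs_sub _ _
  have h1 := rpow_nonneg (abs_nonneg τ) p
  have h2 := rpow_nonneg (abs_nonneg (τ - 1)) p
  rcases le_total |τ| |τ - 1| with h | h
  · have : |τ - 1| ^ p ≤ (1 / 2) ^ p := rpow_le_rpow_of_nonpos (by norm_num) (by linarith) hp
    nlinarith
  · have : |τ| ^ p ≤ (1 / 2) ^ p := rpow_le_rpow_of_nonpos (by norm_num) (by linarith) hp
    nlinarith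

lemma integrable_abs_rpow_mul_abs_sub_one_rpow {p : ℝ} (hp : -1 < p) (hp' : p < -1 / 2) :
    Integrable fun τ : ℝ => |τ| ^ p * |τ - 1| ^ p := by
  have hp0 : p ≤ 0 := by linarith
  have hloc : LocallyIntegrable fun τ : ℝ => |τ| ^ p * |τ - 1| ^ p := by
    refine (((locallyIntegrable_abs_sub_rpow hp 0).add
      (locallyIntegrable_abs_sub_rpow hp 1)).smul ((1 / 2 : ℝ) ^ p)).mono
      (by fun_prop : Measurable fun τ : ℝ => |τ| ^ p * |τ - 1| ^ p).aestronglyMeasurable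
      (ae_of_all _ fun τ => ?_)
    simp only [Pi.add_apply, Pi.smul_apply, smul_eq_mul, sub_zero, norm_eq_abs]
    exact (abs_of_nonneg (by positivity)).trans_le
      ((abs_rpow_mul_abs_sub_one_rpow_le hp0 τ).trans (le_abs_self _))
  have hO : (fun τ : ℝ => |τ| ^ p * |τ - 1| ^ p) =O[cocompact ℝ]
      fun τ => (1 + ‖τ‖) ^ (-(-(p + p))) := by
    have := (abs_sub_rpow_isBigO_cocompact hp0 0).mul (abs_sub_rpow_isBigO_cocompact hp0 1)
    simp only [sub_zero] at this
    refine this.congr_right fun τ => ?_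
    rw [neg_neg, norm_eq_abs, rpow_add (by positivity)]
  exact hloc.integrable_of_isBigO_cocompact hO
    ((integrable_one_add_norm (by simp; linarith)).integrableAtFilter _)

lemma integral_abs_rpow_mul_abs_sub_one_rpow_pos {p : ℝ} (hp : -1 < p) (hp' : p < -1 / 2) :
    0 < ∫ τ : ℝ, |τ| ^ p * |τ - 1| ^ p := by
  refine (integral_pos_iff_support_of_nonneg (fun τ => by positivity)
    (integrable_abs_rpow_mul_abs_sub_one_rpow hp hp')).2 ?_
  refine lt_of_lt_of_le (by simp) (measure_mono (s := Ioi 1) fun τ (hτ : 1 < τ) => ?_)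
  exact (mul_pos (rpow_pos_of_pos (by positivity) p)
    (rpow_pos_of_pos (abs_pos.2 (by linarith)) p)).ne'

lemma abs_sub_rpow_mul_abs_sub_rpow_eq (p : ℝ) {u v : ℝ} (huv : u ≠ v) (s : ℝ) :
    |s - u| ^ p * |s - v| ^ p = |v - u| ^ p * |v - u| ^ p *
      (|(s - u) / (v - u)| ^ p * |(s - u) / (v - u) - 1| ^ p) := by
  have hd : v - u ≠ 0 := sub_ne_zero.2 huv.symm
  have h1 : s - u = (v - u) * ((s - u) / (v - u)) := by field_simp
  have h2 : s - v = (v - u) * ((s - u) / (v - u) - 1) := by field_simp; ring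
  rw [h1, h2, abs_mul, abs_mul, mul_rpow (abs_nonneg _) (abs_nonneg _),
    mul_rpow (abs_nonneg _) (abs_nonneg _), mul_div_cancel_left₀ _ hd]
  ring

lemma integrable_abs_sub_rpow_mul_abs_sub_rpow {p : ℝ} (hp : -1 < p) (hp' : p < -1 / 2)
    {u v : ℝ} (huv : u ≠ v) : Integrable fun s : ℝ => |s - u| ^ p * |s - v| ^ p := by
  have hd : v - u ≠ 0 := sub_ne_zero.2 huv.symm
  refine ((((integrable_abs_rpow_mul_abs_sub_one_rpow hp hp').comp_div hd).comp_sub_right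
    u).const_mul (|v - u| ^ p * |v - u| ^ p)).congr (ae_of_all _ fun s => ?_)
  exact (abs_sub_rpow_mul_abs_sub_rpow_eq p huv s).symm

lemma integral_abs_sub_rpow_mul_abs_sub_rpow (p : ℝ) {u v : ℝ} (huv : u ≠ v) :
    ∫ s : ℝ, |s - u| ^ p * |s - v| ^ p
      = (∫ τ : ℝ, |τ| ^ p * |τ - 1| ^ p) * |u - v| ^ (p + p + 1) := by
  have hd : 0 < |v - u| := abs_pos.2 (sub_ne_zero.2 huv.symm)
  simp_rw [abs_sub_rpow_mul_abs_sub_rpow_eq p huv, MeasureTheory.integral_const_mul]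
  rw [integral_sub_right_eq_self (fun x => |x / (v - u)| ^ p * |x / (v - u) - 1| ^ p) u,
    Measure.integral_comp_div (fun τ => |τ| ^ p * |τ - 1| ^ p), smul_eq_mul, abs_sub_comm u v,
    rpow_add hd, rpow_add hd, rpow_one]
  ring

lemma integral_mul_abs_sub_rpow_mul_mul_abs_sub_rpow (p x y : ℝ) {u v : ℝ} (huv : u ≠ v) :
    ∫ s : ℝ, x * |s - u| ^ p * (y * |s - v| ^ p)
      = (∫ τ : ℝ, |τ| ^ p * |τ - 1| ^ p) * (|u - v| ^ (p + p + 1) * x * y) := by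
  calc ∫ s : ℝ, x * |s - u| ^ p * (y * |s - v| ^ p)
      = x * y * ∫ s : ℝ, |s - u| ^ p * |s - v| ^ p := by
        rw [← MeasureTheory.integral_const_mul]
        congr 1 with s
        ring
    _ = _ := by
        rw [integral_abs_sub_rpow_mul_abs_sub_rpow p huv]
        ring

lemma integrable_mul_abs_sub_rpow_mul_mul_abs_sub_rpow {p : ℝ} (hp : -1 < p)
    (hp' : p < -1 / 2) {g : ℝ → ℝ} (hg : Measurable g) {μ : Measure ℝ} [SFinite μ]
    [NullSingletonClass μ]
    (hK : Integrable (fun q : ℝ × ℝ => |q.1 - q.2| ^ (p + p + 1) * g q.1 * g q.2) (μ.prod μ)) :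
    Integrable
      (fun q : (ℝ × ℝ) × ℝ => g q.1.1 * |q.2 - q.1.1| ^ p * (g q.1.2 * |q.2 - q.1.2| ^ p))
      ((μ.prod μ).prod volume) := by
  have hmeas : Measurable fun q : (ℝ × ℝ) × ℝ =>
      g q.1.1 * |q.2 - q.1.1| ^ p * (g q.1.2 * |q.2 - q.1.2| ^ p) := by fun_prop
  refine (integrable_prod_iff hmeas.aestronglyMeasurable).2 ⟨?_, ?_⟩
  · filter_upwards [ae_prod_fst_ne_snd] with q hq
    refine ((integrable_abs_sub_rpow_mul_abs_sub_rpow hp hp' hq).const_mul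
      (g q.1 * g q.2)).congr (ae_of_all _ fun s => ?_)
    ring
  · refine (hK.norm.const_mul (∫ τ : ℝ, |τ| ^ p * |τ - 1| ^ p)).congr ?_
    filter_upwards [ae_prod_fst_ne_snd] with q hq
    simp only [norm_mul, norm_eq_abs, abs_of_nonneg (rpow_nonneg (abs_nonneg _) _)]
    exact (integral_mul_abs_sub_rpow_mul_mul_abs_sub_rpow p _ _ hq).symm

theorem integral_integral_abs_sub_rpow_mul_nonneg {r : ℝ} (hr : r ∈ Ioo (-1) 0) {g : ℝ → ℝ}
    (hg : Measurable g) {μ : Measure ℝ} [SFinite μ] [NullSingletonClass μ]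
    (hK : Integrable (fun q : ℝ × ℝ => |q.1 - q.2| ^ r * g q.1 * g q.2) (μ.prod μ)) :
    0 ≤ ∫ u, ∫ v, |u - v| ^ r * g u * g v ∂μ ∂μ := by
  set p := (r - 1) / 2
  have hp : -1 < p := by simp only [p]; linarith [hr.1]
  have hp' : p < -1 / 2 := by simp only [p]; linarith [hr.2]
  have hr' : r = p + p + 1 := by ring
  have hC := integral_abs_rpow_mul_abs_sub_one_rpow_pos hp hp'
  rw [hr'] at hK ⊢
  calc (0 : ℝ) ≤ (∫ τ : ℝ, |τ| ^ p * |τ - 1| ^ p)⁻¹ *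
        ∫ q, ∫ s, g q.1 * |s - q.1| ^ p * (g q.2 * |s - q.2| ^ p) ∂volume ∂μ.prod μ :=
        mul_nonneg (inv_nonneg.2 hC.le) (integral_prod_integral_mul_nonneg
          (f := fun u s => g u * |s - u| ^ p)
          (integrable_mul_abs_sub_rpow_mul_mul_abs_sub_rpow hp hp' hg hK))
    _ = ∫ q, |q.1 - q.2| ^ (p + p + 1) * g q.1 * g q.2 ∂μ.prod μ := by
        rw [← MeasureTheory.integral_const_mul]
        refine integral_congr_ae ?_
        filter_upwards [ae_prod_fst_ne_snd] with q hq
        rw [integral_mul_abs_sub_rpow_mul_mul_abs_sub_rpow p _ _ hq]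
        field_simp
    _ = ∫ u, ∫ v, |u - v| ^ (p + p + 1) * g u * g v ∂μ ∂μ :=
        (integral_integral (f := fun u v => |u - v| ^ (p + p + 1) * g u * g v) hK).symm

/-- Positive semidefiniteness of the fractional Brownian motion scalar product
`⟨ξ,η⟩_T = ∫₀ᵀ ∫₀ᵀ φ(u−v) ξ(u) η(v) du dv` with kernel
`φ(x) = H(2H−1)|x|^{2H−2}`, for Hurst parameter `H ∈ (1/2,1)`:
for every continuous `ξ : [0,T] → ℝ`, `⟨ξ,ξ⟩_T ≥ 0`. -/
theorem fbm_scalar_product_pos_semidef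
    (H T : ℝ) (hH : H ∈ Set.Ioo (1/2 : ℝ) 1) (hT : 0 < T)
    (ξ : ℝ → ℝ) (hξ : ContinuousOn ξ (Set.Icc 0 T)) :
    0 ≤ ∫ u in (0:ℝ)..T, ∫ v in (0:ℝ)..T,
        (H * (2*H - 1) * |u - v| ^ (2*H - 2)) * ξ u * ξ v := by
  obtain ⟨hH1, hH2⟩ := hH
  set ξ' := IccExtend hT.le ((Icc 0 T).domRestrict ξ)
  have hξ' : Continuous ξ' := continuous_IccExtend_iff.2 hξ.domRestrict
  have hξξ' : ∀ x ∈ Ioc 0 T, ξ x = ξ' x := fun x hx =>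
    (IccExtend_of_mem hT.le ((Icc 0 T).domRestrict ξ) (Ioc_subset_Icc_self hx)).symm
  obtain ⟨M, hM⟩ :=
    isCompact_Icc.exists_bound_of_continuousOn (hξ'.continuousOn (s := Icc (0 : ℝ) T))
  have hform : (∫ u in (0:ℝ)..T, ∫ v in (0:ℝ)..T,
        (H * (2*H - 1) * |u - v| ^ (2*H - 2)) * ξ u * ξ v)
      = H * (2*H - 1) *
          ∫ u in Ioc 0 T, ∫ v in Ioc 0 T, |u - v| ^ (2*H - 2) * ξ' u * ξ' v := by
    simp only [intervalIntegral.integral_of_le hT.le, ← MeasureTheory.integral_const_mul]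
    refine setIntegral_congr_fun measurableSet_Ioc fun u hu => ?_
    refine setIntegral_congr_fun measurableSet_Ioc fun v hv => ?_
    rw [hξξ' u hu, hξξ' v hv]
    ring
  rw [hform]
  exact mul_nonneg (by nlinarith)
    (integral_integral_abs_sub_rpow_mul_nonneg ⟨by linarith, by linarith⟩ hξ'.measurable
      (integrable_abs_sub_rpow_mul_mul_restrict_Ioc_prod (by linarith) hξ'.measurable
        fun x hx => hM x (Ioc_subset_Icc_self hx)))
end

section
/- If ξ : [0,T] → ℝ is continuous and ∫₀ᵀ ∫₀ᵀ φ(u−v) ξ(u) ξ(v) du dv = 0, then ξ(t) = 0 for all t ∈ [0,T]; hence ⟨·,·⟩_T is a genuine (positive definite) scalar product on the space of continuous functions on [0,T]. -/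
/-!
Put `β = 2 - 2H ∈ (0, 1)`. The Gamma integral `|x|^(-β) = Γ(β)⁻¹ ∫₀^∞ t^(β-1) e^(-t|x|) dt` and
Fubini turn `⟨ξ, ξ⟩_T` into a positive multiple of `∫₀^∞ t^(β-1) Q(t) dt`, where
`Q(t) = ∫∫ e^(-t|u-v|) ξ(u) ξ(v) du dv`. Each `Q(t)` is a sum of squares, because
`e^(-t|u-v|) = 2t ∫_{s < min(u,v)} e^(-t(u-s)) e^(-t(v-s)) ds` (the covariance of an
Ornstein–Uhlenbeck process) gives `Q(t) = 2t ∫ (∫_{u > s} ξ(u) e^(-t(u-s)) du)² ds`.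
So `⟨ξ, ξ⟩_T = 0` forces `Q(t) = 0` for some `t > 0`; then the tail integrals
`∫_s^T ξ(u) e^(-tu) du` vanish for almost every, hence by continuity every, `s ∈ [0, T]`, and
differentiating in `s` gives `ξ = 0`.
-/

open MeasureTheory Set Real Function

theorem locallyIntegrable_abs_rpow {α : ℝ} (hα : -1 < α) :
    LocallyIntegrable (fun x : ℝ => |x| ^ α) := by
  refine locallyIntegrable_of_norm_le_rpow (by simp) (C := 1) (α := -α) (by simp; linarith)
    (ae_of_all _ fun x => ?_) (by fun_prop : Measurable fun x : ℝ => |x| ^ α).aestronglyMeasurable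
  rw [neg_neg, one_mul, norm_of_nonneg (by positivity), norm_eq_abs]

theorem integrableOn_abs_sub_rpow_Ioc_prod {α : ℝ} (hα : -1 < α) (a b : ℝ) :
    IntegrableOn (fun p : ℝ × ℝ => |p.1 - p.2| ^ α) (Ioc a b ×ˢ Ioc a b) := by
  -- The measure-preserving shear `(x, y) ↦ (x - y, y)` maps the square into a product of intervals.
  have hprod : Integrable (fun z : ℝ × ℝ => (Icc (a - b) (b - a)).indicator (fun x => |x| ^ α) z.1 *
      (Ioc a b).indicator 1 z.2) := by
    rw [Measure.volume_eq_prod]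
    refine Integrable.mul_prod ?_ ?_
    · exact ((locallyIntegrable_abs_rpow hα).integrableOn_isCompact
        isCompact_Icc).integrable_indicator measurableSet_Icc
    · exact (integrableOn_const measure_Ioc_lt_top.ne).integrable_indicator measurableSet_Ioc
  have hcomp := ((measurePreserving_sub_prod (volume : Measure ℝ) volume).integrable_comp
    hprod.aestronglyMeasurable).mpr (by rwa [← Measure.volume_eq_prod])
  rw [← Measure.volume_eq_prod] at hcomp
  refine (hcomp.integrableOn (s := Ioc a b ×ˢ Ioc a b)).congr_fun (fun p hp => ?_)
    (measurableSet_Ioc.prod measurableSet_Ioc)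
  have hL : p.1 - p.2 ∈ Icc (a - b) (b - a) := by
    rw [mem_Icc, ← neg_sub, ← abs_le]
    exact abs_sub_le_of_le_of_le hp.1.1.le hp.1.2 hp.2.1.le hp.2.2
  simp [indicator_of_mem hL, indicator_of_mem hp.2]

theorem integrable_abs_sub_rpow_mul_Ioc_prod {α a b M : ℝ} {ζ : ℝ → ℝ} (hα : -1 < α)
    (hζ : Measurable ζ) (hM : ∀ u ∈ Ioc a b, |ζ u| ≤ M) :
    Integrable (fun p : ℝ × ℝ => |p.1 - p.2| ^ α * (ζ p.1 * ζ p.2))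
      ((volume.restrict (Ioc a b)).prod (volume.restrict (Ioc a b))) := by
  rw [Measure.prod_restrict, ← Measure.volume_eq_prod]
  refine (integrableOn_abs_sub_rpow_Ioc_prod hα a b).mul_bdd (c := M * M) (by fun_prop) ?_
  filter_upwards [ae_restrict_mem (measurableSet_Ioc.prod measurableSet_Ioc)] with p hp
  rw [norm_mul, norm_eq_abs, norm_eq_abs]
  exact mul_le_mul (hM _ hp.1) (hM _ hp.2) (abs_nonneg _) ((abs_nonneg _).trans (hM _ hp.1))

theorem Measure.ae_fst_ne_snd {μ ν : Measure ℝ} [SFinite ν] [NullSingletonClass ν] :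
    ∀ᵐ p ∂(μ.prod ν), p.1 ≠ p.2 :=
  (Measure.ae_prod_iff_ae_ae (measurableSet_eq_fun measurable_fst measurable_snd).compl).mpr
    (ae_of_all _ fun x => by simpa [eq_comm] using ν.ae_ne x)

theorem Real.rpow_neg_eq_inv_Gamma_mul_integral {β r : ℝ} (hβ : 0 < β) (hr : 0 < r) :
    r ^ (-β) = (Gamma β)⁻¹ * ∫ t in Ioi 0, t ^ (β - 1) * exp (-(r * t)) := by
  rw [integral_rpow_mul_exp_neg_mul_Ioi hβ hr, one_div, inv_rpow hr.le, ← rpow_neg hr.le,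
    mul_comm _ (Gamma β), inv_mul_cancel_left₀ (Gamma_pos_of_pos hβ).ne']

theorem Real.integrableOn_rpow_mul_exp_neg_mul {β r : ℝ} (hβ : 0 < β) (hr : 0 < r) :
    IntegrableOn (fun t : ℝ => t ^ (β - 1) * exp (-(r * t))) (Ioi 0) := by
  simpa [rpow_one] using integrableOn_rpow_mul_exp_neg_mul_rpow (by linarith) one_pos hr

section Subordination

variable {X : Type*} [MeasurableSpace X] {ρ : Measure X} {β : ℝ} {d f : X → ℝ}

theorem integrable_rpow_mul_exp_neg_mul_prod (hβ : 0 < β) (hd : Measurable d)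
    (hd0 : ∀ᵐ p ∂ρ, 0 < d p) (hf : AEStronglyMeasurable f ρ)
    (hdf : Integrable (fun p => d p ^ (-β) * f p) ρ) :
    Integrable (fun q : X × ℝ => q.2 ^ (β - 1) * exp (-(d q.1 * q.2)) * f q.1)
      (ρ.prod (volume.restrict (Ioi 0))) := by
  have hmeas : Measurable fun q : X × ℝ => q.2 ^ (β - 1) * exp (-(d q.1 * q.2)) := by fun_prop
  have hFmeas : AEStronglyMeasurable (fun q : X × ℝ => q.2 ^ (β - 1) * exp (-(d q.1 * q.2)) * f q.1)
      (ρ.prod (volume.restrict (Ioi 0))) := hmeas.aestronglyMeasurable.mul hf.comp_fst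
  rw [integrable_prod_iff hFmeas]
  refine ⟨?_, (hdf.norm.const_mul (Gamma β)).congr ?_⟩
  · filter_upwards [hd0] with p hp
    exact (integrableOn_rpow_mul_exp_neg_mul hβ hp).mul_const (f p)
  · filter_upwards [hd0] with p hp
    have hnorm : ∀ t ∈ Ioi (0 : ℝ), ‖t ^ (β - 1) * exp (-(d p * t)) * f p‖
        = t ^ (β - 1) * exp (-(d p * t)) * ‖f p‖ := fun t ht => by
      rw [norm_mul, norm_of_nonneg (by have := ht.out; positivity)]
    rw [setIntegral_congr_fun measurableSet_Ioi hnorm, integral_mul_const, norm_mul,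
      norm_of_nonneg (rpow_nonneg hp.le _), rpow_neg_eq_inv_Gamma_mul_integral hβ hp, ← mul_assoc,
      mul_inv_cancel_left₀ (Gamma_pos_of_pos hβ).ne']

variable [SFinite ρ]

theorem integral_rpow_neg_mul_eq_integral_exp_neg_mul (hβ : 0 < β) (hd : Measurable d)
    (hd0 : ∀ᵐ p ∂ρ, 0 < d p) (hf : AEStronglyMeasurable f ρ)
    (hdf : Integrable (fun p => d p ^ (-β) * f p) ρ) :
    ∫ p, d p ^ (-β) * f p ∂ρ
      = (Gamma β)⁻¹ * ∫ t in Ioi 0, t ^ (β - 1) * ∫ p, exp (-(d p * t)) * f p ∂ρ := by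
  have hF := integrable_rpow_mul_exp_neg_mul_prod hβ hd hd0 hf hdf
  calc ∫ p, d p ^ (-β) * f p ∂ρ
      = ∫ p, (Gamma β)⁻¹ * (∫ t in Ioi 0, t ^ (β - 1) * exp (-(d p * t)) * f p) ∂ρ := by
        refine integral_congr_ae ?_
        filter_upwards [hd0] with p hp
        rw [rpow_neg_eq_inv_Gamma_mul_integral hβ hp, integral_mul_const, mul_assoc]
    _ = (Gamma β)⁻¹ * ∫ t in Ioi 0, ∫ p, t ^ (β - 1) * exp (-(d p * t)) * f p ∂ρ := by
        rw [integral_const_mul, integral_integral_swap hF]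
    _ = (Gamma β)⁻¹ * ∫ t in Ioi 0, t ^ (β - 1) * ∫ p, exp (-(d p * t)) * f p ∂ρ := by
        simp_rw [mul_assoc, integral_const_mul]

theorem integrableOn_rpow_mul_integral_exp_neg_mul (hβ : 0 < β) (hd : Measurable d)
    (hd0 : ∀ᵐ p ∂ρ, 0 < d p) (hf : AEStronglyMeasurable f ρ)
    (hdf : Integrable (fun p => d p ^ (-β) * f p) ρ) :
    IntegrableOn (fun t => t ^ (β - 1) * ∫ p, exp (-(d p * t)) * f p ∂ρ) (Ioi 0) := by
  rw [IntegrableOn]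
  simpa only [mul_assoc, integral_const_mul] using
    (integrable_rpow_mul_exp_neg_mul_prod hβ hd hd0 hf hdf).integral_prod_right

end Subordination

theorem exists_pos_eq_zero_of_integral_rpow_mul_eq_zero {γ : ℝ} {f : ℝ → ℝ}
    (hf : ∀ t ∈ Ioi 0, 0 ≤ f t) (hint : IntegrableOn (fun t => t ^ γ * f t) (Ioi 0))
    (h0 : ∫ t in Ioi 0, t ^ γ * f t = 0) : ∃ t > 0, f t = 0 := by
  have hnonneg : 0 ≤ᵐ[volume.restrict (Ioi 0)] fun t => t ^ γ * f t :=
    ae_restrict_of_forall_mem measurableSet_Ioi fun t ht =>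
      mul_nonneg (rpow_nonneg ht.out.le _) (hf t ht)
  have hzero := (integral_eq_zero_iff_of_nonneg_ae hnonneg hint).mp h0
  have : (ae (volume.restrict (Ioi (0 : ℝ)))).NeBot := ae_restrict_neBot.mpr (by simp)
  obtain ⟨t, htf, ht⟩ := (hzero.and (ae_restrict_mem measurableSet_Ioi)).exists
  exact ⟨t, ht, (mul_eq_zero_iff_left (rpow_pos_of_pos ht _).ne').mp htf⟩

section Gram

variable {α β : Type*} [MeasurableSpace α] {μ : Measure α} [IsFiniteMeasure μ] {G : α → β → ℝ}

theorem integral_mul_prod_eq_sq (s : β) :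
    ∫ p, G p.1 s * G p.2 s ∂(μ.prod μ) = (∫ u, G u s ∂μ) ^ 2 :=
  (integral_prod_mul (fun u => G u s) (fun v => G v s)).trans (sq _).symm

variable [MeasurableSpace β] {ν : Measure β} {g : β → ℝ}

theorem integrable_mul_prod_of_abs_le (hG : Measurable (uncurry G))
    (hg : Integrable (fun s => g s ^ 2) ν) (hGg : ∀ᵐ u ∂μ, ∀ s, |G u s| ≤ g s) :
    Integrable (fun q : (α × α) × β => G q.1.1 q.2 * G q.1.2 q.2) ((μ.prod μ).prod ν) := by
  have hfst := ((Measure.quasiMeasurePreserving_fst (ν := μ)).comp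
    (Measure.quasiMeasurePreserving_fst (ν := ν))).tendsto_ae.eventually hGg
  have hsnd := ((Measure.quasiMeasurePreserving_snd (μ := μ)).comp
    (Measure.quasiMeasurePreserving_fst (ν := ν))).tendsto_ae.eventually hGg
  refine ((integrable_const (1 : ℝ)).mul_prod hg).mono' ?_ ?_
  · exact ((hG.comp (f := fun q : (α × α) × β => (q.1.1, q.2)) (by fun_prop)).mul
      (hG.comp (f := fun q : (α × α) × β => (q.1.2, q.2)) (by fun_prop))).aestronglyMeasurable
  · filter_upwards [hfst, hsnd] with q h₁ h₂
    rw [norm_mul, one_mul, sq]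
    exact mul_le_mul (h₁ q.2) (h₂ q.2) (abs_nonneg _) ((abs_nonneg _).trans (h₁ q.2))

variable [SFinite ν]

theorem integral_prod_integral_mul_eq_integral_sq (hG : Measurable (uncurry G))
    (hg : Integrable (fun s => g s ^ 2) ν) (hGg : ∀ᵐ u ∂μ, ∀ s, |G u s| ≤ g s) :
    ∫ p, (∫ s, G p.1 s * G p.2 s ∂ν) ∂(μ.prod μ) = ∫ s, (∫ u, G u s ∂μ) ^ 2 ∂ν := by
  rw [integral_integral_swap (f := fun (p : α × α) (s : β) => G p.1 s * G p.2 s)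
    (integrable_mul_prod_of_abs_le hG hg hGg)]
  simp_rw [integral_mul_prod_eq_sq]

theorem integrable_integral_sq_of_abs_le (hG : Measurable (uncurry G))
    (hg : Integrable (fun s => g s ^ 2) ν) (hGg : ∀ᵐ u ∂μ, ∀ s, |G u s| ≤ g s) :
    Integrable (fun s => (∫ u, G u s ∂μ) ^ 2) ν := by
  simpa only [integral_mul_prod_eq_sq] using
    (integrable_mul_prod_of_abs_le hG hg hGg).integral_prod_right

end Gram

noncomputable def ouKernel (t u s : ℝ) : ℝ := if s < u then exp (t * (s - u)) else 0

theorem measurable_ouKernel (t : ℝ) : Measurable (uncurry (ouKernel t)) :=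
  Measurable.ite (measurableSet_lt measurable_snd measurable_fst) (by fun_prop) measurable_const

theorem exp_neg_abs_sub_mul_eq_integral_ouKernel {t : ℝ} (ht : 0 < t) (u v : ℝ) :
    exp (-(|u - v| * t)) = 2 * t * ∫ s, ouKernel t u s * ouKernel t v s := by
  have hprod : ∀ s, ouKernel t u s * ouKernel t v s
      = (Iio (min u v)).indicator (fun s => exp (-(t * (u + v))) * exp (2 * t * s)) s := by
    intro s
    simp only [ouKernel, indicator, mem_Iio, lt_min_iff]
    split_ifs <;> first | (rw [← exp_add, ← exp_add]; ring_nf) | simp_all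
  have habs : |u - v| = u + v - 2 * min u v := by
    linarith [max_sub_min_eq_abs' u v, min_add_max u v]
  simp_rw [hprod]
  rw [integral_indicator measurableSet_Iio, integral_const_mul, ← integral_Iic_eq_integral_Iio,
    integral_exp_mul_Iic (by positivity), habs]
  field_simp
  rw [← exp_add]
  ring_nf

theorem abs_mul_ouKernel_le {t T u c M : ℝ} (ht : 0 ≤ t) (hu : u ∈ Ioc 0 T) (hc : |c| ≤ M)
    (s : ℝ) : |c * ouKernel t u s| ≤ (Iic T).indicator (fun s => M * exp (t * s)) s := by
  have hM : 0 ≤ M := (abs_nonneg c).trans hc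
  unfold ouKernel
  split_ifs with hsu
  · rw [indicator_of_mem (show s ∈ Iic T from (hsu.trans_le hu.2).le), abs_mul, abs_exp]
    exact mul_le_mul hc (exp_le_exp.mpr (by nlinarith [hu.1])) (exp_pos _).le hM
  · rw [mul_zero, abs_zero]
    exact indicator_nonneg (fun _ _ => by positivity) s

theorem integrable_indicator_Iic_mul_exp_sq {t : ℝ} (ht : 0 < t) (M T : ℝ) :
    Integrable (fun s => (Iic T).indicator (fun s => M * exp (t * s)) s ^ 2) := by
  refine (((integrableOn_exp_mul_Iic (by positivity : 0 < 2 * t) T).integrable_indicator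
    measurableSet_Iic).const_mul (M ^ 2)).congr (ae_of_all _ fun s => ?_)
  by_cases hs : s ∈ Iic T
  · simp only [indicator_of_mem hs, mul_pow, ← exp_nat_mul]
    ring_nf
  · simp [indicator_of_notMem hs]

section ExponentialKernel

variable {t T M : ℝ} {ζ : ℝ → ℝ}

theorem integral_exp_kernel_eq_integral_sq (ht : 0 < t) (hζ : Measurable ζ)
    (hM : ∀ u ∈ Ioc 0 T, |ζ u| ≤ M) :
    ∫ p, exp (-(|p.1 - p.2| * t)) * (ζ p.1 * ζ p.2)
        ∂((volume.restrict (Ioc 0 T)).prod (volume.restrict (Ioc 0 T)))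
      = 2 * t * ∫ s, (∫ u in Ioc 0 T, ζ u * ouKernel t u s) ^ 2 := by
  have hG : Measurable (uncurry fun u s => ζ u * ouKernel t u s) :=
    (hζ.comp measurable_fst).mul (measurable_ouKernel t)
  have hGg := ae_restrict_of_forall_mem (μ := volume) measurableSet_Ioc fun u hu =>
    abs_mul_ouKernel_le ht.le hu (hM u hu)
  rw [← integral_prod_integral_mul_eq_integral_sq hG (integrable_indicator_Iic_mul_exp_sq ht M T)
    hGg, ← integral_const_mul]
  refine integral_congr_ae (ae_of_all _ fun p => ?_)
  dsimp only
  rw [exp_neg_abs_sub_mul_eq_integral_ouKernel ht, mul_assoc, ← integral_mul_const]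
  congr 2
  ext s
  ring

theorem integral_exp_kernel_nonneg (ht : 0 < t) (hζ : Measurable ζ)
    (hM : ∀ u ∈ Ioc 0 T, |ζ u| ≤ M) :
    0 ≤ ∫ p, exp (-(|p.1 - p.2| * t)) * (ζ p.1 * ζ p.2)
        ∂((volume.restrict (Ioc 0 T)).prod (volume.restrict (Ioc 0 T))) := by
  rw [integral_exp_kernel_eq_integral_sq ht hζ hM]
  positivity

theorem integrable_integral_mul_ouKernel_sq (ht : 0 < t) (hζ : Measurable ζ)
    (hM : ∀ u ∈ Ioc 0 T, |ζ u| ≤ M) :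
    Integrable fun s => (∫ u in Ioc 0 T, ζ u * ouKernel t u s) ^ 2 :=
  integrable_integral_sq_of_abs_le ((hζ.comp measurable_fst).mul (measurable_ouKernel t))
    (integrable_indicator_Iic_mul_exp_sq ht M T)
    (ae_restrict_of_forall_mem (μ := volume) measurableSet_Ioc fun u hu =>
      abs_mul_ouKernel_le ht.le hu (hM u hu))

theorem integral_mul_ouKernel_eq {s : ℝ} (hs : s ∈ Icc 0 T) :
    ∫ u in Ioc 0 T, ζ u * ouKernel t u s = exp (t * s) * ∫ u in s..T, ζ u * exp (-(t * u)) := by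
  have hk : ∀ u, ζ u * ouKernel t u s
      = (Ioi s).indicator (fun u => exp (t * s) * (ζ u * exp (-(t * u)))) u := by
    intro u
    simp only [ouKernel, indicator, mem_Ioi]
    split_ifs
    · rw [mul_left_comm, ← exp_add]
      ring_nf
    · rw [mul_zero]
  have hIoc : Ioc 0 T ∩ Ioi s = Ioc s T := by
    ext u
    simp only [mem_inter_iff, mem_Ioc, mem_Ioi]
    constructor
    · rintro ⟨⟨-, huT⟩, hsu⟩; exact ⟨hsu, huT⟩
    · rintro ⟨hsu, huT⟩; exact ⟨⟨hs.1.trans_lt hsu, huT⟩, hsu⟩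
  simp_rw [hk]
  rw [setIntegral_indicator measurableSet_Ioi, hIoc, integral_const_mul,
    intervalIntegral.integral_of_le hs.2]

end ExponentialKernel

theorem ContinuousOn.eqOn_zero_of_ae_integral_eq_zero {g : ℝ → ℝ} {a b : ℝ} (hab : a < b)
    (hg : ContinuousOn g (Icc a b)) (h : ∀ᵐ s, s ∈ Ioo a b → ∫ u in s..b, g u = 0) :
    EqOn g 0 (Icc a b) := by
  have hcont : ContinuousOn (fun s => ∫ u in s..b, g u) (Icc a b) := by
    have := intervalIntegral.continuousOn_primitive_interval_left (μ := volume) (a := a) (b := b)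
      (f := g) (by rw [uIcc_of_le hab.le]; exact hg.integrableOn_Icc)
    rwa [uIcc_of_le hab.le] at this
  have hF : EqOn (fun s => ∫ u in s..b, g u) 0 (Ioo a b) :=
    Measure.eqOn_open_of_ae_eq ((ae_restrict_iff' measurableSet_Ioo).mpr h) isOpen_Ioo
      (hcont.mono Ioo_subset_Icc_self) continuousOn_const
  have hg' : EqOn g 0 (Ioo a b) := fun s hs => by
    have hderiv := intervalIntegral.integral_hasDerivAt_left
      ((hg.mono (Icc_subset_Icc hs.1.le le_rfl)).intervalIntegrable_of_Icc hs.2.le)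
      ((hg.mono Ioo_subset_Icc_self).stronglyMeasurableAtFilter isOpen_Ioo s hs)
      (hg.continuousAt (Icc_mem_nhds hs.1 hs.2))
    have hzero : HasDerivAt (fun s => ∫ u in s..b, g u) 0 s :=
      (hasDerivAt_const s 0).congr_of_eventuallyEq
        (Filter.eventually_of_mem (isOpen_Ioo.mem_nhds hs) hF)
    exact neg_eq_zero.mp (hderiv.unique hzero)
  exact hg'.of_subset_closure hg continuousOn_const Ioo_subset_Icc_self (closure_Ioo hab.ne).ge

theorem eqOn_zero_of_integral_exp_kernel_eq_zero {t T M : ℝ} {ζ : ℝ → ℝ} (hT : 0 < T)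
    (ht : 0 < t) (hζ : Continuous ζ) (hM : ∀ u ∈ Ioc 0 T, |ζ u| ≤ M)
    (h0 : ∫ p, exp (-(|p.1 - p.2| * t)) * (ζ p.1 * ζ p.2)
        ∂((volume.restrict (Ioc 0 T)).prod (volume.restrict (Ioc 0 T))) = 0) :
    EqOn ζ 0 (Icc 0 T) := by
  rw [integral_exp_kernel_eq_integral_sq ht hζ.measurable hM,
    mul_eq_zero_iff_left (by positivity),
    integral_eq_zero_iff_of_nonneg (fun s => sq_nonneg _)
      (integrable_integral_mul_ouKernel_sq ht hζ.measurable hM)] at h0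
  have htail : ∀ᵐ s, s ∈ Ioo 0 T → ∫ u in s..T, ζ u * exp (-(t * u)) = 0 := by
    filter_upwards [h0] with s hs hsT
    rwa [Pi.zero_apply, sq_eq_zero_iff, integral_mul_ouKernel_eq (Ioo_subset_Icc_self hsT),
      mul_eq_zero_iff_left (exp_pos _).ne'] at hs
  intro r hr
  have := (hζ.mul (by fun_prop)).continuousOn.eqOn_zero_of_ae_integral_eq_zero hT htail hr
  simpa [(exp_pos _).ne'] using this

theorem eqOn_zero_of_integral_integral_abs_sub_rpow_mul_eq_zero {β T : ℝ} {ζ : ℝ → ℝ}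
    (hβ₀ : 0 < β) (hβ₁ : β < 1) (hT : 0 < T) (hζ : Continuous ζ)
    (h0 : ∫ u in Ioc 0 T, ∫ v in Ioc 0 T, |u - v| ^ (-β) * (ζ u * ζ v) = 0) :
    EqOn ζ 0 (Icc 0 T) := by
  obtain ⟨M, hM⟩ := isCompact_Icc.exists_bound_of_continuousOn hζ.continuousOn
  have hζM : ∀ u ∈ Ioc 0 T, |ζ u| ≤ M := fun u hu => hM u (Ioc_subset_Icc_self hu)
  have hint := integrable_abs_sub_rpow_mul_Ioc_prod (α := -β) (by linarith) hζ.measurable hζM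
  have hd0 : ∀ᵐ p ∂((volume.restrict (Ioc 0 T)).prod (volume.restrict (Ioc 0 T))),
      0 < |p.1 - p.2| :=
    Measure.ae_fst_ne_snd.mono fun p (hp : p.1 ≠ p.2) => abs_pos.mpr (sub_ne_zero.mpr hp)
  rw [← integral_prod _ hint,
    integral_rpow_neg_mul_eq_integral_exp_neg_mul hβ₀ (by fun_prop) hd0 (by fun_prop) hint,
    mul_eq_zero_iff_left (inv_ne_zero (Gamma_pos_of_pos hβ₀).ne')] at h0
  obtain ⟨t, ht, hQ⟩ := exists_pos_eq_zero_of_integral_rpow_mul_eq_zero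
    (fun t ht => integral_exp_kernel_nonneg ht hζ.measurable hζM)
    (integrableOn_rpow_mul_integral_exp_neg_mul hβ₀ (by fun_prop) hd0 (by fun_prop) hint) h0
  exact eqOn_zero_of_integral_exp_kernel_eq_zero hT ht hζ hζM hQ

/-- Positive definiteness of the fractional Brownian motion scalar product:
if `ξ : [0,T] → ℝ` is continuous and
`⟨ξ,ξ⟩_T = ∫₀ᵀ ∫₀ᵀ H(2H−1)|u−v|^{2H−2} ξ(u) ξ(v) du dv = 0`,
then `ξ ≡ 0` on `[0,T]`. -/
theorem fbm_scalar_product_pos_def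
    (H T : ℝ) (hH : H ∈ Set.Ioo (1/2 : ℝ) 1) (hT : 0 < T)
    (ξ : ℝ → ℝ) (hξ : ContinuousOn ξ (Set.Icc 0 T))
    (hzero : (∫ u in (0:ℝ)..T, ∫ v in (0:ℝ)..T,
        (H * (2*H - 1) * |u - v| ^ (2*H - 2)) * ξ u * ξ v) = 0) :
    ∀ t ∈ Set.Icc (0:ℝ) T, ξ t = 0 := by
  obtain ⟨hH₁, hH₂⟩ := hH
  set ζ := IccExtend hT.le ((Icc 0 T).domRestrict ξ)
  have hζξ : EqOn ζ ξ (Icc 0 T) := fun x hx => IccExtend_of_mem hT.le _ hx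
  have h0 : ∫ u in Ioc 0 T, ∫ v in Ioc 0 T, |u - v| ^ (-(2 - 2 * H)) * (ζ u * ζ v) = 0 := by
    rw [← mul_right_inj' (by nlinarith : H * (2 * H - 1) ≠ 0), mul_zero, ← integral_const_mul]
    refine Eq.trans ?_ hzero
    simp only [intervalIntegral.integral_of_le hT.le, ← integral_const_mul]
    refine setIntegral_congr_fun measurableSet_Ioc fun u hu =>
      setIntegral_congr_fun measurableSet_Ioc fun v hv => ?_
    rw [hζξ (Ioc_subset_Icc_self hu), hζξ (Ioc_subset_Icc_self hv), neg_sub]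
    ring
  intro r hr
  rw [← hζξ hr]
  exact eqOn_zero_of_integral_integral_abs_sub_rpow_mul_eq_zero (by linarith) (by linarith) hT
    (continuous_IccExtend_iff.mpr hξ.domRestrict) h0 hr
end

section
/- For all s, t ≥ 0 one has the identity ∫₀ᵗ ∫₀ˢ H(2H−1)|u−v|^{2H−2} du dv = (1/2)(t^{2H} + s^{2H} − |t−s|^{2H}). In particular the covariance function of fractional Brownian motion with Hurst parameter H ∈ (1/2,1) is obtained by integrating the kernel φ over the rectangle [0,t] × [0,s]. -/
open MeasureTheory intervalIntegral Set Filter Topology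

/-!
For `p > 0` the odd function `sign x * |x| ^ p` is continuous with derivative `p * |x| ^ (p - 1)`
off `0`, and `|x| ^ p` has derivative `p * sign x * |x| ^ (p - 1)` off `0`; so both
`|x| ^ (p - 1)` and (for `p > 1`) `sign x * |x| ^ (p - 1)` can be integrated by the fundamental
theorem of calculus with one exceptional point. After the shift `x = u - v`, the inner integral
equals `H * (sign (s - v) * |s - v| ^ (2H - 1) + sign v * |v| ^ (2H - 1))`, and integrating that
in `v` over `[0, t]` gives `(t ^ 2H + s ^ 2H - |t - s| ^ 2H) / 2`.
-/

lemma hasDerivAt_abs_rpow_of_ne_zero (q : ℝ) {x : ℝ} (hx : x ≠ 0) :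
    HasDerivAt (fun y : ℝ => |y| ^ q) (q * |x| ^ (q - 1) * SignType.sign x) x := by
  convert (hasDerivAt_abs hx).rpow_const (p := q) (Or.inl (abs_ne_zero.mpr hx)) using 1
  ring

lemma hasDerivAt_sign_mul_abs_rpow (p : ℝ) {x : ℝ} (hx : x ≠ 0) :
    HasDerivAt (fun y : ℝ => SignType.sign y * |y| ^ p) (p * |x| ^ (p - 1)) x := by
  have hsq : (SignType.sign x : ℝ) * SignType.sign x = 1 := by
    rcases hx.lt_or_gt with h | h <;> simp [h]
  have hsign : ∀ᶠ y in 𝓝 x, SignType.sign y = SignType.sign x :=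
    (continuousAt_sign_of_ne_zero hx).eventually_mem ((isOpen_discrete {_}).mem_nhds rfl)
  have hconst : (fun y : ℝ => (SignType.sign y : ℝ) * |y| ^ p) =ᶠ[𝓝 x]
      fun y => SignType.sign x * |y| ^ p :=
    hsign.mono fun y hy => by simp only [hy]
  refine (((hasDerivAt_abs_rpow_of_ne_zero p hx).const_mul _).congr_of_eventuallyEq
    hconst).congr_deriv ?_
  linear_combination (p * |x| ^ (p - 1)) * hsq

lemma continuous_sign_mul_abs_rpow {p : ℝ} (hp : 0 < p) :
    Continuous (fun y : ℝ => SignType.sign y * |y| ^ p) := by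
  refine continuous_iff_continuousAt.2 fun x => ?_
  rcases eq_or_ne x 0 with rfl | hx
  · have hbound : ∀ y : ℝ, ‖(SignType.sign y : ℝ) * |y| ^ p‖ ≤ |y| ^ p := by
      intro y
      rcases lt_trichotomy y 0 with h | rfl | h <;>
        simp [*, Real.zero_rpow hp.ne', abs_of_nonneg (Real.rpow_nonneg (abs_nonneg _) p)]
    have hlim : Tendsto (fun y : ℝ => |y| ^ p) (𝓝 0) (𝓝 0) := by
      simpa [Real.zero_rpow hp.ne'] using
        (continuous_abs.rpow_const fun _ => Or.inr hp.le).tendsto 0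
    simpa [ContinuousAt] using squeeze_zero_norm hbound hlim
  · exact (hasDerivAt_sign_mul_abs_rpow p hx).continuousAt

lemma intervalIntegrable_abs_rpow {p : ℝ} (hp : 0 < p) (a b : ℝ) :
    IntervalIntegrable (fun x : ℝ => |x| ^ (p - 1)) volume a b := by
  have from_zero : ∀ c, IntervalIntegrable (fun x : ℝ => |x| ^ (p - 1)) volume 0 c := by
    intro c
    refine intervalIntegrable_deriv_of_nonneg
      ((continuous_sign_mul_abs_rpow hp).div_const p).continuousOn (fun x hx => ?_)
      (fun x _ => by positivity)
    have hx0 : x ≠ 0 := by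
      rintro rfl
      simp only [mem_Ioo, min_lt_iff, lt_max_iff, lt_self_iff_false, false_or] at hx
      linarith [hx.1, hx.2]
    refine ((hasDerivAt_sign_mul_abs_rpow p hx0).div_const p).congr_deriv ?_
    field_simp
  exact (from_zero a).symm.trans (from_zero b)

lemma integral_abs_rpow {p : ℝ} (hp : 0 < p) (a b : ℝ) :
    ∫ x in a..b, |x| ^ (p - 1) =
      (SignType.sign b * |b| ^ p - SignType.sign a * |a| ^ p) / p := by
  rw [sub_div]
  refine integral_eq_of_hasDerivAt_off_countable (fun x => SignType.sign x * |x| ^ p / p) _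
    (countable_singleton 0) ((continuous_sign_mul_abs_rpow hp).div_const p).continuousOn
    (fun x hx => ?_) (intervalIntegrable_abs_rpow hp a b)
  refine ((hasDerivAt_sign_mul_abs_rpow p hx.2).div_const p).congr_deriv ?_
  field_simp

lemma integral_sign_mul_abs_rpow {p : ℝ} (hp : 1 < p) (a b : ℝ) :
    ∫ x in a..b, SignType.sign x * |x| ^ (p - 1) = (|b| ^ p - |a| ^ p) / p := by
  rw [sub_div]
  refine integral_eq_of_hasDerivAt_off_countable (fun x => |x| ^ p / p) _
    (countable_singleton 0)
    ((continuous_abs.rpow_const fun _ => Or.inr (by linarith)).div_const p).continuousOn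
    (fun x hx => ?_)
    ((continuous_sign_mul_abs_rpow (by linarith)).intervalIntegrable a b)
  refine ((hasDerivAt_abs_rpow_of_ne_zero p hx.2).div_const p).congr_deriv ?_
  field_simp

/-- The covariance identity for fractional Brownian motion with Hurst
parameter `H ∈ (1/2,1)`: for all `s, t ≥ 0`,
`∫₀ᵗ ∫₀ˢ H(2H−1)|u−v|^{2H−2} du dv = (1/2)(t^{2H} + s^{2H} − |t−s|^{2H})`. -/
theorem fbm_covariance_integral
    (H : ℝ) (hH : H ∈ Set.Ioo (1/2 : ℝ) 1)
    (s t : ℝ) (hs : 0 ≤ s) (ht : 0 ≤ t) :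
    (∫ v in (0:ℝ)..t, ∫ u in (0:ℝ)..s, H * (2*H - 1) * |u - v| ^ (2*H - 2))
      = (1/2) * (t ^ (2*H) + s ^ (2*H) - |t - s| ^ (2*H)) := by
  have hq : 1 < 2 * H := by linarith [hH.1]
  have hp : 0 < 2 * H - 1 := by linarith
  have hodd : Continuous fun x : ℝ => (SignType.sign x : ℝ) * |x| ^ (2*H - 1) :=
    continuous_sign_mul_abs_rpow hp
  have inner (v : ℝ) : ∫ u in (0:ℝ)..s, H * (2*H - 1) * |u - v| ^ (2*H - 2) =
      H * (SignType.sign (s - v) * |s - v| ^ (2*H - 1)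
        - SignType.sign (-v) * |-v| ^ (2*H - 1)) := by
    rw [intervalIntegral.integral_const_mul, integral_comp_sub_right (fun x => |x| ^ (2*H - 2)),
      show 2*H - 2 = 2*H - 1 - 1 by ring, integral_abs_rpow hp, zero_sub, mul_assoc,
      mul_div_cancel₀ _ hp.ne']
  simp_rw [inner, intervalIntegral.integral_const_mul]
  rw [intervalIntegral.integral_sub,
    integral_comp_sub_left (fun x => (SignType.sign x : ℝ) * |x| ^ (2*H - 1)),
    integral_comp_neg (fun x => (SignType.sign x : ℝ) * |x| ^ (2*H - 1)),
    integral_sign_mul_abs_rpow hq, integral_sign_mul_abs_rpow hq]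
  · rw [sub_zero, neg_zero, abs_zero, Real.zero_rpow (zero_lt_one.trans hq).ne', abs_neg,
      abs_of_nonneg hs, abs_of_nonneg ht, abs_sub_comm]
    field_simp [(show 0 < H by linarith [hH.1]).ne']
    ring
  · exact (hodd.comp (continuous_sub_left s)).intervalIntegrable _ _
  · exact (hodd.comp continuous_neg).intervalIntegrable _ _
end

section
/- Backward Gronwall-type lemma for quadratic bounds: let L ≥ 0, let g : [0,T] → [0,∞) be Lebesgue integrable, and let x : [0,T] → [0,∞) be continuous and satisfy x(t)² ≤ 2L ∫_t^T x(s) g(s) ds for every t ∈ [0,T]. Then x(t) ≤ L ∫_t^T g(s) ds for every t ∈ [0,T]. -/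
open MeasureTheory intervalIntegral Set

/-- Backward Gronwall-type lemma for quadratic bounds: if `L ≥ 0`,
`g : [0,T] → [0,∞)` is integrable, `x : [0,T] → [0,∞)` is continuous, and
`x(t)² ≤ 2L ∫_t^T x(s) g(s) ds` for every `t ∈ [0,T]`, then
`x(t) ≤ L ∫_t^T g(s) ds` for every `t ∈ [0,T]`. -/
theorem backward_gronwall_quadratic
    (T L : ℝ) (hT : 0 < T) (hL : 0 ≤ L)
    (g x : ℝ → ℝ)
    (hg : IntegrableOn g (Set.Icc 0 T))
    (hg0 : ∀ s ∈ Set.Icc (0:ℝ) T, 0 ≤ g s)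
    (hx : ContinuousOn x (Set.Icc 0 T))
    (hx0 : ∀ t ∈ Set.Icc (0:ℝ) T, 0 ≤ x t)
    (hineq : ∀ t ∈ Set.Icc (0:ℝ) T, x t ^ 2 ≤ 2 * L * ∫ s in t..T, x s * g s) :
    ∀ t ∈ Set.Icc (0:ℝ) T, x t ≤ L * ∫ s in t..T, g s := by
  intro t ht
  obtain ⟨ht0, htT⟩ := ht
  -- `x * g` is integrable on `[0,T]`
  have hxm : AEStronglyMeasurable x (volume.restrict (Icc (0:ℝ) T)) :=
    hx.aestronglyMeasurable measurableSet_Icc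
  obtain ⟨M, hM⟩ : ∃ M, ∀ s ∈ Icc (0:ℝ) T, ‖x s‖ ≤ M :=
    isCompact_Icc.exists_bound_of_continuousOn hx
  have hxg : IntegrableOn (fun s => x s * g s) (Icc (0:ℝ) T) := by
    refine Integrable.bdd_mul (c := M) hg hxm ?_
    filter_upwards [ae_restrict_mem measurableSet_Icc] with s hs using hM s hs
  -- interval integrability on subintervals
  have hsub : ∀ a b : ℝ, a ∈ Icc (0:ℝ) T → b ∈ Icc (0:ℝ) T →
      Set.uIcc a b ⊆ Set.Icc 0 T := by
    intro a b ha hb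
    rw [show Icc (0:ℝ) T = Set.uIcc 0 T from (Set.uIcc_of_le hT.le).symm] at ha hb ⊢
    exact Set.uIcc_subset_uIcc ha hb
  have hgI : ∀ a b : ℝ, a ∈ Icc (0:ℝ) T → b ∈ Icc (0:ℝ) T →
      IntervalIntegrable g volume a b := fun a b ha hb =>
    (hg.mono_set (hsub a b ha hb)).intervalIntegrable
  have hxgI : ∀ a b : ℝ, a ∈ Icc (0:ℝ) T → b ∈ Icc (0:ℝ) T →
      IntervalIntegrable (fun s => x s * g s) volume a b := fun a b ha hb =>
    (hxg.mono_set (hsub a b ha hb)).intervalIntegrable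
  have hTmem : T ∈ Icc (0:ℝ) T := ⟨hT.le, le_rfl⟩
  have h0mem : (0:ℝ) ∈ Icc (0:ℝ) T := ⟨le_rfl, hT.le⟩
  -- the function z
  set z : ℝ → ℝ := fun r => ∫ s in r..T, x s * g s with hzdef
  -- nonnegativity of z and of integrals of g
  have hz0 : ∀ r ∈ Icc (0:ℝ) T, 0 ≤ z r := by
    intro r hr
    refine intervalIntegral.integral_nonneg hr.2 ?_
    intro u hu
    have hu' : u ∈ Icc (0:ℝ) T := ⟨le_trans hr.1 hu.1, hu.2⟩
    exact mul_nonneg (hx0 u hu') (hg0 u hu')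
  have hGnn : ∀ a b : ℝ, a ∈ Icc (0:ℝ) T → b ∈ Icc (0:ℝ) T → a ≤ b →
      0 ≤ ∫ s in a..b, g s := by
    intro a b ha hb hab
    refine intervalIntegral.integral_nonneg hab ?_
    intro u hu
    exact hg0 u ⟨le_trans ha.1 hu.1, le_trans hu.2 hb.2⟩
  -- z is antitone
  have hzadd : ∀ a b : ℝ, a ∈ Icc (0:ℝ) T → b ∈ Icc (0:ℝ) T →
      z a = (∫ s in a..b, x s * g s) + z b := by
    intro a b ha hb
    exact (integral_add_adjacent_intervals (hxgI a b ha hb) (hxgI b T hb hTmem)).symm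
  have hzanti : ∀ a b : ℝ, a ∈ Icc (0:ℝ) T → b ∈ Icc (0:ℝ) T → a ≤ b → z b ≤ z a := by
    intro a b ha hb hab
    have h1 := hzadd a b ha hb
    have h2 : 0 ≤ ∫ s in a..b, x s * g s := by
      refine intervalIntegral.integral_nonneg hab ?_
      intro u hu
      have hu' : u ∈ Icc (0:ℝ) T := ⟨le_trans ha.1 hu.1, le_trans hu.2 hb.2⟩
      exact mul_nonneg (hx0 u hu') (hg0 u hu')
    linarith
  -- z is continuous
  have hzc : ContinuousOn z (Icc (0:ℝ) T) := by
    have : IntegrableOn (fun s => x s * g s) (Set.uIcc 0 T) := by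
      rwa [Set.uIcc_of_le hT.le]
    have h2 := continuousOn_primitive_interval_left this
    rwa [Set.uIcc_of_le hT.le] at h2
  -- bound on x via hineq: x r ^ 2 ≤ 2 L z r
  have hx2 : ∀ r ∈ Icc (0:ℝ) T, x r ^ 2 ≤ 2 * L * z r := hineq
  -- main ε-approximation step
  have main : ∀ e : ℝ, 0 < e → x t ≤ e * (1 + L * ∫ s in (0:ℝ)..T, g s) +
      (L * ∫ s in t..T, g s) := by
    intro e he
    -- the comparison function w
    set w : ℝ → ℝ := fun r => Real.sqrt (e ^ 2 + 2 * L * z r) with hwdef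
    have hwarg : ∀ r ∈ Icc (0:ℝ) T, 0 ≤ e ^ 2 + 2 * L * z r := by
      intro r hr
      have := hz0 r hr
      nlinarith
    have hwsq : ∀ r ∈ Icc (0:ℝ) T, w r ^ 2 = e ^ 2 + 2 * L * z r := by
      intro r hr
      exact Real.sq_sqrt (hwarg r hr)
    have hwnn : ∀ r, 0 ≤ w r := fun r => Real.sqrt_nonneg _
    have hwe : ∀ r ∈ Icc (0:ℝ) T, e ≤ w r := by
      intro r hr
      nlinarith [hwsq r hr, hwnn r, hz0 r hr, mul_nonneg hL (hz0 r hr)]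
    have hxw : ∀ r ∈ Icc (0:ℝ) T, x r ≤ w r := by
      intro r hr
      nlinarith [hx2 r hr, hwsq r hr, hwnn r, hx0 r hr]
    have hwanti : ∀ a b : ℝ, a ∈ Icc (0:ℝ) T → b ∈ Icc (0:ℝ) T → a ≤ b →
        w b ≤ w a := by
      intro a b ha hb hab
      apply Real.sqrt_le_sqrt
      have := hzanti a b ha hb hab
      nlinarith
    have hwc : ContinuousOn w (Icc (0:ℝ) T) :=
      Real.continuous_sqrt.comp_continuousOn
        (continuousOn_const.add (continuousOn_const.mul hzc))
    -- uniform continuity with modulus η = e^2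
    set η : ℝ := e ^ 2 with hηdef
    have hη0 : 0 < η := by positivity
    obtain ⟨δ, hδ0, hδ⟩ := Metric.uniformContinuousOn_iff.mp
      (isCompact_Icc.uniformContinuousOn_of_continuous hwc) η hη0
    -- the one-step estimate
    have step : ∀ a b : ℝ, a ∈ Icc (0:ℝ) T → b ∈ Icc (0:ℝ) T → a ≤ b → b - a < δ →
        w a ≤ w b + (1 + η / e) * (L * ∫ s in a..b, g s) := by
      intro a b ha hb hab hlt
      set I : ℝ := ∫ s in a..b, g s with hIdef
      have hI0 : 0 ≤ I := hGnn a b ha hb hab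
      have hLI : 0 ≤ L * I := mul_nonneg hL hI0
      -- the quadratic identity
      have hq : (w a - w b) * (w a + w b) = 2 * L * ∫ s in a..b, x s * g s := by
        have h1 := hzadd a b ha hb
        have h2 := hwsq a ha
        have h3 := hwsq b hb
        linear_combination h2 - h3 + 2 * L * h1
      -- bound the integral of x*g by w a * I
      have hxgle : (∫ s in a..b, x s * g s) ≤ w a * I := by
        have hmono : (∫ s in a..b, x s * g s) ≤ ∫ s in a..b, w a * g s := by
          refine intervalIntegral.integral_mono_on hab (hxgI a b ha hb)
            ((hgI a b ha hb).const_mul _) ?_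
          intro s hs
          have hs' : s ∈ Icc (0:ℝ) T := ⟨le_trans ha.1 hs.1, le_trans hs.2 hb.2⟩
          have h1 : x s ≤ w s := hxw s hs'
          have h2 : w s ≤ w a := hwanti a s ha hs' hs.1
          exact mul_le_mul_of_nonneg_right (h1.trans h2) (hg0 s hs')
        rwa [intervalIntegral.integral_const_mul] at hmono
      -- closeness: w a - w b ≤ η
      have hclose : w a - w b ≤ η := by
        have hd : dist a b < δ := by
          rw [Real.dist_eq, abs_sub_lt_iff]
          constructor <;> linarith
        have := hδ a ha b hb hd
        rw [Real.dist_eq] at this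
        have := abs_lt.mp this
        linarith [this.1, this.2]
      have hwa := hwe a ha
      have hwb := hwe b hb
      have hwab : 0 < w a + w b := by linarith
      -- 2 * w a ≤ (1 + η/e) * (w a + w b)
      have hC : 2 * w a ≤ (1 + η / e) * (w a + w b) := by
        have h1 : η ≤ (η / e) * (w a + w b) := by
          have h2 : (η / e) * (2 * e) = 2 * η := by
            field_simp
          have h3 : (η / e) * (2 * e) ≤ (η / e) * (w a + w b) := by
            apply mul_le_mul_of_nonneg_left (by linarith) (by positivity)
          linarith
        linarith
      -- combine
      have hmain : (w a - w b) * (w a + w b) ≤ ((1 + η / e) * (L * I)) * (w a + w b) := by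
        calc (w a - w b) * (w a + w b) = 2 * L * ∫ s in a..b, x s * g s := hq
          _ ≤ 2 * L * (w a * I) := by nlinarith [hxgle]
          _ = (L * I) * (2 * w a) := by ring
          _ ≤ (L * I) * ((1 + η / e) * (w a + w b)) :=
            mul_le_mul_of_nonneg_left hC hLI
          _ = ((1 + η / e) * (L * I)) * (w a + w b) := by ring
      have := le_of_mul_le_mul_right hmain hwab
      linarith
    -- iterate the step over a partition
    have key : ∀ n : ℕ, ∀ a : ℝ, a ∈ Icc (0:ℝ) T → T - a ≤ n * (δ / 2) →
        w a ≤ w T + (1 + η / e) * (L * ∫ s in a..T, g s) := by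
      intro n
      induction n with
      | zero =>
        intro a ha hn
        have haT : a = T := by
          have : T ≤ a := by simpa using hn
          linarith [ha.2]
        subst haT
        simp
      | succ n ih =>
        intro a ha hn
        by_cases hcase : T - a ≤ n * (δ / 2)
        · exact ih a ha hcase
        · push_neg at hcase
          set b : ℝ := min (a + δ / 2) T with hbdef
          have hab : a ≤ b := le_min (by linarith) ha.2
          have hb : b ∈ Icc (0:ℝ) T := ⟨le_trans ha.1 hab, min_le_right _ _⟩
          have hba : b - a ≤ δ / 2 := by
            have : b ≤ a + δ / 2 := min_le_left _ _
            linarith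
          have hTb : T - b ≤ n * (δ / 2) := by
            rcases le_or_gt (a + δ / 2) T with hcase2 | hcase2
            · have hbeq : b = a + δ / 2 := min_eq_left hcase2
              have hn' : T - a ≤ (n + 1 : ℕ) * (δ / 2) := hn
              push_cast at hn'
              rw [hbeq]
              linarith
            · have hbeq : b = T := min_eq_right hcase2.le
              rw [hbeq]
              simp
              positivity
          have h1 := step a b ha hb hab (by linarith)
          have h2 := ih b hb hTb
          have hadd : (∫ s in a..T, g s) = (∫ s in a..b, g s) + ∫ s in b..T, g s :=
            (integral_add_adjacent_intervals (hgI a b ha hb) (hgI b T hb hTmem)).symm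
          have hexp : (1 + η / e) * (L * ((∫ s in a..b, g s) + ∫ s in b..T, g s)) =
              (1 + η / e) * (L * ∫ s in a..b, g s) +
              (1 + η / e) * (L * ∫ s in b..T, g s) := by ring
          rw [hadd, hexp]
          linarith
    -- choose n large enough
    obtain ⟨n, hn⟩ := exists_nat_ge (T / (δ / 2))
    have hTn : T - t ≤ n * (δ / 2) := by
      have hδ2 : (0:ℝ) < δ / 2 := by linarith
      have : T ≤ n * (δ / 2) := by
        rw [div_le_iff₀ hδ2] at hn
        linarith
      linarith
    have hwt := key n t ⟨ht0, htT⟩ hTn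
    have hzT : z T = 0 := by
      simp [hzdef]
    have hwT : w T = e := by
      rw [hwdef]
      simp only [hzT]
      rw [show e ^ 2 + 2 * L * 0 = e ^ 2 by ring]
      exact Real.sqrt_sq he.le
    have hηe : η / e = e := by
      rw [hηdef]
      field_simp
    have hxwt : x t ≤ w t := hxw t ⟨ht0, htT⟩
    have hGt0 : (∫ s in t..T, g s) ≤ ∫ s in (0:ℝ)..T, g s := by
      have hadd : (∫ s in (0:ℝ)..T, g s) = (∫ s in (0:ℝ)..t, g s) + ∫ s in t..T, g s :=
        (integral_add_adjacent_intervals (hgI 0 t h0mem ⟨ht0, htT⟩)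
          (hgI t T ⟨ht0, htT⟩ hTmem)).symm
      have := hGnn 0 t h0mem ⟨ht0, htT⟩ ht0
      linarith
    have hGtnn : 0 ≤ ∫ s in t..T, g s := hGnn t T ⟨ht0, htT⟩ hTmem htT
    rw [hwT, hηe] at hwt
    -- x t ≤ e + (1 + e) * (L * G t) ≤ e*(1 + L*G 0) + L*G t
    have : x t ≤ e + (1 + e) * (L * ∫ s in t..T, g s) := by linarith
    have hfin : (1 + e) * (L * ∫ s in t..T, g s) ≤
        (L * ∫ s in t..T, g s) + e * (L * ∫ s in (0:ℝ)..T, g s) := by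
      have h1 : e * (L * ∫ s in t..T, g s) ≤ e * (L * ∫ s in (0:ℝ)..T, g s) :=
        mul_le_mul_of_nonneg_left (mul_le_mul_of_nonneg_left hGt0 hL) he.le
      nlinarith
    nlinarith
  -- pass to the limit e → 0
  have hK : 0 < 1 + L * ∫ s in (0:ℝ)..T, g s := by
    have : 0 ≤ L * ∫ s in (0:ℝ)..T, g s :=
      mul_nonneg hL (hGnn 0 T h0mem hTmem hT.le)
    linarith
  refine le_of_forall_sub_le ?_
  intro ε hε
  have he : 0 < ε / (1 + L * ∫ s in (0:ℝ)..T, g s) := div_pos hε hK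
  have := main _ he
  rw [div_mul_cancel₀ _ (ne_of_gt hK)] at this
  linarith
end

section
/- Key square-root integral estimate (inequality (3.7)): let H ∈ (1/2,1), T > 0, δ ∈ (0,T], β ≥ 0, and let u, w : [−δ, T] → [0,∞) be Lebesgue measurable. Then ( ∫₀ᵀ [ e^{βs} ( u(s−δ) + w(s−δ) ) ]^{1/2} ds )² ≤ 2 e^{βT} ( 2T + 2T^{2−2H}/(2−2H) ) ∫_{−δ}^{T} e^{βs} ( u(s) + |s|^{2H−1} w(s) ) ds. -/
open MeasureTheory Set ENNReal

/-!
With `f(s) = e^{βs} u(s - δ)` and `g(s) = e^{βs} w(s - δ)`, split `√(f + g) ≤ √f + √g` and use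
`(a + b)² ≤ 2(a² + b²)`. Cauchy–Schwarz against the constant `1` bounds `(∫ √f)²`. For `g`, write
`g = |s - δ|^{1-2H} · (|s - δ|^{2H-1} g)` off the null set `{δ}` and apply Cauchy–Schwarz to this
product; the first factor is integrable because `1 - 2H > -1`. In both terms the delay is
removed by the substitution `t = s - δ`, at the cost of the factor `e^{βδ} ≤ e^{βT}`.
-/

section

variable {α : Type*} [MeasurableSpace α] {μ : Measure α}

theorem sq_lintegral_sqrt_mul_le {f g : α → ℝ≥0∞} (hf : AEMeasurable f μ)
    (hg : AEMeasurable g μ) :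
    (∫⁻ x, (f x * g x) ^ (1/2 : ℝ) ∂μ) ^ 2 ≤ (∫⁻ x, f x ∂μ) * ∫⁻ x, g x ∂μ := by
  have hsq : ∀ x : ℝ≥0∞, (x ^ (1/2 : ℝ)) ^ (2 : ℝ) = x := fun x => by
    rw [← ENNReal.rpow_mul]; norm_num
  have holder := ENNReal.lintegral_mul_le_Lp_mul_Lq μ Real.HolderConjugate.two_two
    (hf.pow_const (1/2 : ℝ)) (hg.pow_const (1/2 : ℝ))
  simp only [Pi.mul_apply, hsq, ← ENNReal.mul_rpow_of_nonneg _ _ (by norm_num : (0:ℝ) ≤ 1/2)]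
    at holder
  calc (∫⁻ x, (f x * g x) ^ (1/2 : ℝ) ∂μ) ^ 2
      ≤ (((∫⁻ x, f x ∂μ) * ∫⁻ x, g x ∂μ) ^ (1/2 : ℝ)) ^ 2 := by gcongr
    _ = (∫⁻ x, f x ∂μ) * ∫⁻ x, g x ∂μ := by
        rw [← ENNReal.rpow_natCast, ← ENNReal.rpow_mul]; norm_num

theorem sq_lintegral_sqrt_le_measure_univ_mul {g : α → ℝ≥0∞} (hg : AEMeasurable g μ) :
    (∫⁻ x, g x ^ (1/2 : ℝ) ∂μ) ^ 2 ≤ μ univ * ∫⁻ x, g x ∂μ := by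
  simpa using sq_lintegral_sqrt_mul_le (f := fun _ => 1) aemeasurable_const hg

theorem sq_lintegral_sqrt_le_lintegral_inv_mul {ρ g : α → ℝ≥0∞} (hρ : AEMeasurable ρ μ)
    (hg : AEMeasurable g μ) (hρ0 : ∀ᵐ x ∂μ, ρ x ≠ 0) (hρtop : ∀ᵐ x ∂μ, ρ x ≠ ∞) :
    (∫⁻ x, g x ^ (1/2 : ℝ) ∂μ) ^ 2 ≤ (∫⁻ x, (ρ x)⁻¹ ∂μ) * ∫⁻ x, ρ x * g x ∂μ := by
  have hfactor : (fun x => g x ^ (1/2 : ℝ))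
      =ᵐ[μ] fun x => ((ρ x)⁻¹ * (ρ x * g x)) ^ (1/2 : ℝ) := by
    filter_upwards [hρ0, hρtop] with x h0 htop
    rw [← mul_assoc, ENNReal.inv_mul_cancel h0 htop, one_mul]
  rw [lintegral_congr_ae hfactor]
  exact sq_lintegral_sqrt_mul_le hρ.inv (hρ.mul hg)

theorem sq_lintegral_sqrt_add_le {f g : α → ℝ≥0∞} (hf : AEMeasurable f μ) :
    (∫⁻ x, (f x + g x) ^ (1/2 : ℝ) ∂μ) ^ 2
      ≤ 2 * ((∫⁻ x, f x ^ (1/2 : ℝ) ∂μ) ^ 2 + (∫⁻ x, g x ^ (1/2 : ℝ) ∂μ) ^ 2) := by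
  have h := ENNReal.lintegral_Lp_add_le_of_le_one (p := 1/2) (g := g) hf (by norm_num)
    (by norm_num)
  rw [show (1:ℝ) / (1/2) = 2 by norm_num, show (2:ℝ) - 1 = 1 by norm_num] at h
  simpa only [ENNReal.rpow_two, ENNReal.rpow_one, Pi.add_apply] using h

end

theorem sq_lintegral_sqrt_le_abs_sub_rpow {μ : Measure ℝ} [NullSingletonClass μ] (x q : ℝ)
    {g : ℝ → ℝ≥0∞} (hg : AEMeasurable g μ) :
    (∫⁻ s, g s ^ (1/2 : ℝ) ∂μ) ^ 2
      ≤ (∫⁻ s, ENNReal.ofReal (|s - x| ^ (-q)) ∂μ) *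
        ∫⁻ s, ENNReal.ofReal (|s - x| ^ q) * g s ∂μ := by
  have hpos : ∀ᵐ s ∂μ, 0 < |s - x| :=
    (μ.ae_ne x).mono fun s hs => abs_pos.2 (sub_ne_zero.2 hs)
  have hinv : (fun s => (ENNReal.ofReal (|s - x| ^ q))⁻¹)
      =ᵐ[μ] fun s => ENNReal.ofReal (|s - x| ^ (-q)) := by
    filter_upwards [hpos] with s hs
    rw [← ENNReal.ofReal_inv_of_pos (Real.rpow_pos_of_pos hs _), ← Real.rpow_neg hs.le]
  rw [← lintegral_congr_ae hinv]
  refine sq_lintegral_sqrt_le_lintegral_inv_mul (by fun_prop) hg ?_ (by simp)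
  exact hpos.mono fun s hs => (ENNReal.ofReal_pos.2 (Real.rpow_pos_of_pos hs _)).ne'

theorem setLIntegral_Icc_comp_sub_right (f : ℝ → ℝ≥0∞) (a b c : ℝ) :
    ∫⁻ s in Icc a b, f (s - c) = ∫⁻ t in Icc (a - c) (b - c), f t := by
  rw [← image_sub_const_Icc]
  exact (measurePreserving_sub_right volume c).setLIntegral_comp_emb
    (MeasurableEquiv.subRight c).measurableEmbedding f _

theorem setLIntegral_Icc_comp_neg (f : ℝ → ℝ≥0∞) (a b : ℝ) :
    ∫⁻ s in Icc a b, f (-s) = ∫⁻ t in Icc (-b) (-a), f t := by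
  rw [← neg_Icc, ← image_neg_eq_neg]
  exact (Measure.measurePreserving_neg volume).setLIntegral_comp_emb
    (MeasurableEquiv.neg ℝ).measurableEmbedding f _

theorem lintegral_Icc_zero_rpow {c p : ℝ} (hc : 0 ≤ c) (hp : -1 < p) :
    ∫⁻ t in Icc 0 c, ENNReal.ofReal (t ^ p) = ENNReal.ofReal (c ^ (p + 1) / (p + 1)) := by
  rw [← setLIntegral_congr Ioc_ae_eq_Icc, ← ofReal_integral_eq_lintegral_ofReal,
    ← intervalIntegral.integral_of_le hc, integral_rpow (Or.inl hp),
    Real.zero_rpow (by linarith), sub_zero]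
  · exact (intervalIntegral.intervalIntegrable_rpow' hp).1
  · filter_upwards [ae_restrict_mem measurableSet_Ioc] with t ht
    exact Real.rpow_nonneg ht.1.le p

theorem lintegral_Icc_neg_abs_rpow_le {c p : ℝ} (hc : 0 ≤ c) (hp : -1 < p) :
    ∫⁻ t in Icc (-c) c, ENNReal.ofReal (|t| ^ p)
      ≤ 2 * ENNReal.ofReal (c ^ (p + 1) / (p + 1)) := by
  have hright : ∫⁻ t in Icc 0 c, ENNReal.ofReal (|t| ^ p)
      = ENNReal.ofReal (c ^ (p + 1) / (p + 1)) := by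
    rw [← lintegral_Icc_zero_rpow hc hp]
    exact setLIntegral_congr_fun measurableSet_Icc fun t ht => by rw [abs_of_nonneg ht.1]
  have hleft : ∫⁻ t in Icc (-c) 0, ENNReal.ofReal (|t| ^ p)
      = ∫⁻ t in Icc 0 c, ENNReal.ofReal (|t| ^ p) := by
    simpa using (setLIntegral_Icc_comp_neg (fun t => ENNReal.ofReal (|t| ^ p)) 0 c).symm
  calc ∫⁻ t in Icc (-c) c, ENNReal.ofReal (|t| ^ p)
      ≤ ∫⁻ t in Icc (-c) 0 ∪ Icc 0 c, ENNReal.ofReal (|t| ^ p) :=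
        lintegral_mono_set Icc_subset_Icc_union_Icc
    _ ≤ (∫⁻ t in Icc (-c) 0, ENNReal.ofReal (|t| ^ p))
        + ∫⁻ t in Icc 0 c, ENNReal.ofReal (|t| ^ p) := lintegral_union_le _ _ _
    _ = 2 * ENNReal.ofReal (c ^ (p + 1) / (p + 1)) := by rw [hleft, hright, two_mul]

theorem setLIntegral_Icc_abs_sub_rpow_le {δ T p : ℝ} (hδ0 : 0 ≤ δ) (hδT : δ ≤ T)
    (hp : -1 < p) :
    ∫⁻ s in Icc 0 T, ENNReal.ofReal (|s - δ| ^ p)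
      ≤ 2 * ENNReal.ofReal (T ^ (p + 1) / (p + 1)) := by
  rw [setLIntegral_Icc_comp_sub_right (fun t => ENNReal.ofReal (|t| ^ p))]
  exact (lintegral_mono_set (Icc_subset_Icc (by linarith) (by linarith))).trans
    (lintegral_Icc_neg_abs_rpow_le (hδ0.trans hδT) hp)

theorem setLIntegral_exp_mul_comp_sub_le {β δ T : ℝ} (hβ : 0 ≤ β) (hδ0 : 0 ≤ δ) (hδT : δ ≤ T)
    (f : ℝ → ℝ≥0∞) :
    ∫⁻ s in Icc 0 T, ENNReal.ofReal (Real.exp (β * s)) * f (s - δ)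
      ≤ ENNReal.ofReal (Real.exp (β * T)) *
        ∫⁻ t in Icc (-δ) T, ENNReal.ofReal (Real.exp (β * t)) * f t := by
  have hweight : ∀ t, ENNReal.ofReal (Real.exp (β * (t + δ)))
      ≤ ENNReal.ofReal (Real.exp (β * T)) * ENNReal.ofReal (Real.exp (β * t)) := fun t => by
    rw [← ENNReal.ofReal_mul (Real.exp_nonneg _), ← Real.exp_add]
    gcongr
    nlinarith
  calc ∫⁻ s in Icc 0 T, ENNReal.ofReal (Real.exp (β * s)) * f (s - δ)
      = ∫⁻ t in Icc (0 - δ) (T - δ), ENNReal.ofReal (Real.exp (β * (t + δ))) * f t := by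
        simp_rw [← setLIntegral_Icc_comp_sub_right
          (fun t => ENNReal.ofReal (Real.exp (β * (t + δ))) * f t), sub_add_cancel]
    _ ≤ ∫⁻ t in Icc (-δ) T, ENNReal.ofReal (Real.exp (β * (t + δ))) * f t :=
        lintegral_mono_set (Icc_subset_Icc (zero_sub δ).ge (by linarith))
    _ ≤ ∫⁻ t in Icc (-δ) T,
          ENNReal.ofReal (Real.exp (β * T)) * (ENNReal.ofReal (Real.exp (β * t)) * f t) := by
        refine lintegral_mono fun t => ?_
        rw [← mul_assoc]
        gcongr ?_ * _
        exact hweight t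
    _ = _ := lintegral_const_mul' _ _ ofReal_ne_top

theorem sq_setLIntegral_sqrt_exp_mul_comp_sub_le {β δ T : ℝ} (hβ : 0 ≤ β) (hδ0 : 0 ≤ δ)
    (hδT : δ ≤ T) {f : ℝ → ℝ≥0∞} (hf : Measurable f) :
    (∫⁻ s in Icc 0 T, (ENNReal.ofReal (Real.exp (β * s)) * f (s - δ)) ^ (1/2 : ℝ)) ^ 2
      ≤ ENNReal.ofReal T * (ENNReal.ofReal (Real.exp (β * T)) *
        ∫⁻ t in Icc (-δ) T, ENNReal.ofReal (Real.exp (β * t)) * f t) := by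
  refine (sq_lintegral_sqrt_le_measure_univ_mul (by fun_prop)).trans ?_
  rw [Measure.restrict_apply_univ, Real.volume_Icc, sub_zero]
  gcongr
  exact setLIntegral_exp_mul_comp_sub_le hβ hδ0 hδT f

theorem sq_setLIntegral_sqrt_exp_mul_comp_sub_le_abs_rpow {β δ T q : ℝ} (hβ : 0 ≤ β)
    (hδ0 : 0 ≤ δ) (hδT : δ ≤ T) (hq : q < 1) {f : ℝ → ℝ≥0∞} (hf : Measurable f) :
    (∫⁻ s in Icc 0 T, (ENNReal.ofReal (Real.exp (β * s)) * f (s - δ)) ^ (1/2 : ℝ)) ^ 2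
      ≤ 2 * ENNReal.ofReal (T ^ (1 - q) / (1 - q)) * (ENNReal.ofReal (Real.exp (β * T)) *
        ∫⁻ t in Icc (-δ) T,
          ENNReal.ofReal (Real.exp (β * t)) * (ENNReal.ofReal (|t| ^ q) * f t)) := by
  refine (sq_lintegral_sqrt_le_abs_sub_rpow δ q (by fun_prop)).trans ?_
  gcongr ?_ * ?_
  · have hweight := setLIntegral_Icc_abs_sub_rpow_le hδ0 hδT (p := -q) (by linarith)
    rwa [neg_add_eq_sub] at hweight
  · simp_rw [mul_left_comm (ENNReal.ofReal (|_ - δ| ^ q))]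
    exact setLIntegral_exp_mul_comp_sub_le hβ hδ0 hδT fun t => ENNReal.ofReal (|t| ^ q) * f t

/-- Key square-root integral estimate (inequality (3.7)): for `H ∈ (1/2,1)`,
`T > 0`, `δ ∈ (0,T]`, `β ≥ 0` and measurable `u, w : [−δ,T] → [0,∞]`,
`(∫₀ᵀ [e^{βs}(u(s−δ)+w(s−δ))]^{1/2} ds)²
  ≤ 2 e^{βT} (2T + 2T^{2−2H}/(2−2H)) ∫_{−δ}^{T} e^{βs}(u(s)+|s|^{2H−1} w(s)) ds`. -/
theorem sqrt_integral_estimate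
    (H T δ β : ℝ) (hH : H ∈ Set.Ioo (1/2 : ℝ) 1) (hT : 0 < T)
    (hδ : δ ∈ Set.Ioc 0 T) (hβ : 0 ≤ β)
    (u w : ℝ → ℝ≥0∞) (hu : Measurable u) (hw : Measurable w) :
    (∫⁻ s in Set.Icc (0:ℝ) T,
        (ENNReal.ofReal (Real.exp (β * s)) * (u (s - δ) + w (s - δ))) ^ (1/2 : ℝ)) ^ 2
      ≤ ENNReal.ofReal (2 * Real.exp (β * T) * (2*T + 2*T ^ (2 - 2*H) / (2 - 2*H))) *
        ∫⁻ s in Set.Icc (-δ) T,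
          ENNReal.ofReal (Real.exp (β * s)) *
            (u s + ENNReal.ofReal (|s| ^ (2*H - 1)) * w s) := by
  obtain ⟨-, hH1⟩ := hH
  obtain ⟨hδ0, hδT⟩ := hδ
  set e : ℝ → ℝ≥0∞ := fun s => ENNReal.ofReal (Real.exp (β * s))
  set I := ∫⁻ s in Icc (-δ) T, e s * (u s + ENNReal.ofReal (|s| ^ (2*H - 1)) * w s)
  set K := T ^ (2 - 2*H) / (2 - 2*H)
  have hu_part := sq_setLIntegral_sqrt_exp_mul_comp_sub_le hβ hδ0.le hδT hu
  have hw_part := sq_setLIntegral_sqrt_exp_mul_comp_sub_le_abs_rpow hβ hδ0.le hδT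
    (q := 2*H - 1) (by linarith) hw
  rw [show 1 - (2*H - 1) = 2 - 2*H by ring] at hw_part
  have hu_le_I : ∫⁻ t in Icc (-δ) T, e t * u t ≤ I :=
    lintegral_mono fun t => by gcongr; exact le_self_add
  have hw_le_I : ∫⁻ t in Icc (-δ) T, e t * (ENNReal.ofReal (|t| ^ (2*H - 1)) * w t) ≤ I :=
    lintegral_mono fun t => by gcongr; exact le_add_self
  have hK : 0 ≤ K := div_nonneg (Real.rpow_nonneg hT.le _) (by linarith)
  calc _ = (∫⁻ s in Icc 0 T, (e s * u (s - δ) + e s * w (s - δ)) ^ (1/2 : ℝ)) ^ 2 := by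
        simp_rw [e, mul_add]
    _ ≤ 2 * (ENNReal.ofReal T * (e T * I) + 2 * ENNReal.ofReal K * (e T * I)) := by
        refine (sq_lintegral_sqrt_add_le (by fun_prop)).trans ?_
        gcongr
        exacts [hu_part.trans (by gcongr), hw_part.trans (by gcongr)]
    _ = ENNReal.ofReal (2 * Real.exp (β * T) * (T + 2 * K)) * I := by
        rw [ENNReal.ofReal_mul (by positivity), ENNReal.ofReal_mul (by positivity),
          ENNReal.ofReal_add hT.le (by positivity), ENNReal.ofReal_mul (by positivity)]
        simp only [e, ENNReal.ofReal_ofNat]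
        ring
    _ ≤ ENNReal.ofReal (2 * Real.exp (β * T) * (2*T + 2*T ^ (2 - 2*H) / (2 - 2*H))) * I := by
        gcongr ?_ * _
        rw [mul_div_assoc]
        gcongr
        linarith
end
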